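/- arXiv:1706.07900 — 3 statements merged into one kernel-verified Lean document; each statement's English description precedes it below -/
import Mathlib

section
/- Let G be a finite simple graph on vertex set V and let S ⊆ V be a set of vertices with V ∖ S nonempty. Then Break(G, S) is a tree (connected and acyclic) if and only if S is an independent set of G (no two vertices of S are adjacent) and the subgraph of G induced on V ∖ S is a tree. -/
/-!
If `S` is independent, every copy `(s, w)` of a broken vertex is a leaf hanging on the kept
vertex `w`, and `Break(G, S)` restricted to the kept vertices is `G[V ∖ S]`. Adding or removing
leaves hanging on a nonempty vertex set creates or destroys neither cycles nor disconnection.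
Conversely, an edge `ab` inside `S` produces the two copies `(a, b)` and `(b, a)`, which are
adjacent only to each other, so `Break(G, S)` is disconnected as soon as `V ∖ S` is nonempty.
-/

/-- The graph obtained from `G` by breaking every vertex in `S`:
each `s ∈ S` of degree `k` is replaced by `k` new degree-1 vertices,
one attached to each former neighbor of `s`. -/
def SimpleGraph.Break {V : Type*} (G : SimpleGraph V) (S : Set V) :
    SimpleGraph ((Sᶜ : Set V) ⊕ {p : V × V // p.1 ∈ S ∧ G.Adj p.1 p.2}) where
  Adj x y :=
    match x, y with
    | Sum.inl x, Sum.inl y => G.Adj x y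
    | Sum.inl x, Sum.inr p => p.1.2 = (x : V)
    | Sum.inr p, Sum.inl x => p.1.2 = (x : V)
    | Sum.inr p, Sum.inr q => p.1.2 = q.1.1 ∧ q.1.2 = p.1.1
  symm := by
    constructor
    rintro (x | p) (y | q) h
    · exact h.symm
    · exact h
    · exact h
    · exact ⟨h.2, h.1⟩
  loopless := by
    constructor
    rintro (x | p) h
    · exact G.ne_of_adj h rfl
    · exact G.ne_of_adj p.2.2 h.1.symm

namespace SimpleGraph

variable {V : Type*} {G : SimpleGraph V}

lemma Walk.IsCycle.not_subsingleton_neighborSet {u : V} {c : G.Walk u u} (hc : c.IsCycle) :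
    ¬(G.neighborSet u).Subsingleton := fun h =>
  hc.snd_ne_penultimate (h (c.adj_snd hc.not_nil) (c.adj_penultimate hc.not_nil).symm)

lemma isAcyclic_iff_induce_of_subsingleton_neighborSet {s : Set V}
    (hs : ∀ v ∉ s, (G.neighborSet v).Subsingleton) :
    G.IsAcyclic ↔ (G.induce s).IsAcyclic := by
  classical
  refine ⟨fun h => h.induce s, fun h u c hc => ?_⟩
  have hcs : ∀ x ∈ c.support, x ∈ s := fun x hx => by
    by_contra hxs
    exact (hc.rotate hx).not_subsingleton_neighborSet (hs x hxs)
  exact h _ (Walk.IsCycle.of_map (p := c.induce s hcs) (f := (Embedding.induce s).toHom)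
    (by rwa [Walk.map_induce]))

lemma Preconnected.of_induce {s : Set V} (h : (G.induce s).Preconnected)
    (hs : ∀ v ∉ s, ∃ w ∈ s, G.Adj v w) : G.Preconnected := by
  have hreach : ∀ v, ∃ w ∈ s, G.Reachable v w := fun v => by
    by_cases hv : v ∈ s
    · exact ⟨v, hv, .rfl⟩
    · obtain ⟨w, hw, hvw⟩ := hs v hv
      exact ⟨w, hw, hvw.reachable⟩
  intro u v
  obtain ⟨u', hu', hu⟩ := hreach u
  obtain ⟨v', hv', hv⟩ := hreach v
  exact hu.trans <| ((h ⟨u', hu'⟩ ⟨v', hv'⟩).map (Embedding.induce s).toHom).trans hv.symm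

theorem isTree_iff_induce_of_forall_neighborSet_eq_singleton {s : Set V} (hne : s.Nonempty)
    (hs : ∀ v ∉ s, ∃ w ∈ s, G.neighborSet v = {w}) :
    G.IsTree ↔ (G.induce s).IsTree := by
  have hsub : ∀ v ∉ s, (G.neighborSet v).Subsingleton := fun v hv => by
    obtain ⟨w, -, hw⟩ := hs v hv
    exact hw ▸ Set.subsingleton_singleton
  have hadj : ∀ v ∉ s, ∃ w ∈ s, G.Adj v w := fun v hv => by
    obtain ⟨w, hws, hw⟩ := hs v hv
    exact ⟨w, hws, show w ∈ G.neighborSet v from hw ▸ rfl⟩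
  have : Nonempty s := hne.to_subtype
  rw [isTree_iff, isTree_iff, connected_iff, connected_iff,
    isAcyclic_iff_induce_of_subsingleton_neighborSet hsub]
  exact ⟨fun ⟨⟨hc, _⟩, ha⟩ => ⟨⟨hc.induce_of_degree_eq_one hsub, inferInstance⟩, ha⟩,
    fun ⟨⟨hc, _⟩, ha⟩ => ⟨⟨hc.of_induce hadj, hne.to_type⟩, ha⟩⟩

lemma Preconnected.eq_or_eq_of_neighborSet_subset (hG : G.Preconnected) {u v : V}
    (hu : G.neighborSet u ⊆ {v}) (hv : G.neighborSet v ⊆ {u}) (x : V) : x = u ∨ x = v := by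
  by_contra hx
  obtain ⟨p⟩ := hG u x
  obtain ⟨d, -, hd, hd'⟩ := p.exists_boundary_dart {u, v} (by simp) hx
  rcases hd with hd | hd
  · exact hd' (.inr (hu (hd ▸ d.adj)))
  · exact hd' (.inl (hv (hd ▸ d.adj)))

namespace Break

open Sum

variable {S : Set V}

@[simp] lemma adj_inl_inl {x y : (Sᶜ : Set V)} :
    (G.Break S).Adj (inl x) (inl y) ↔ G.Adj x y := .rfl

@[simp] lemma adj_inr_inl {p : {p : V × V // p.1 ∈ S ∧ G.Adj p.1 p.2}} {x : (Sᶜ : Set V)} :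
    (G.Break S).Adj (inr p) (inl x) ↔ p.1.2 = x := .rfl

@[simp] lemma adj_inr_inr {p q : {p : V × V // p.1 ∈ S ∧ G.Adj p.1 p.2}} :
    (G.Break S).Adj (inr p) (inr q) ↔ p.1.2 = q.1.1 ∧ q.1.2 = p.1.1 := .rfl

def inlEmbedding (G : SimpleGraph V) (S : Set V) : G.induce Sᶜ ↪g G.Break S where
  toEmbedding := .inl
  map_rel_iff' := adj_inl_inl

lemma neighborSet_inr_of_notMem {p : {p : V × V // p.1 ∈ S ∧ G.Adj p.1 p.2}} (h : p.1.2 ∉ S) :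
    (G.Break S).neighborSet (inr p) = {inl ⟨p.1.2, h⟩} := by
  ext (x | q)
  · simp [eq_comm, Subtype.ext_iff]
  · simp only [mem_neighborSet, adj_inr_inr, Set.mem_singleton_iff, reduceCtorEq, iff_false]
    exact fun hq => h (hq.1 ▸ q.2.1)

lemma neighborSet_inr_subset_of_mem {p : {p : V × V // p.1 ∈ S ∧ G.Adj p.1 p.2}} (h : p.1.2 ∈ S) :
    (G.Break S).neighborSet (inr p) ⊆ {inr ⟨(p.1.2, p.1.1), h, p.2.2.symm⟩} := by
  rintro (x | q) hq
  · exact (x.2 ((show p.1.2 = x from hq) ▸ h)).elim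
  · simp only [mem_neighborSet, adj_inr_inr] at hq
    simp [Subtype.ext_iff, Prod.ext_iff, hq.1, hq.2]

lemma isIndepSet_of_connected (hne : (Sᶜ : Set V).Nonempty) (h : (G.Break S).Connected) :
    G.IsIndepSet S := by
  intro a ha b hb _ hab
  obtain ⟨x, hx⟩ := hne
  rcases h.preconnected.eq_or_eq_of_neighborSet_subset
    (neighborSet_inr_subset_of_mem (p := ⟨(a, b), ha, hab⟩) hb)
    (neighborSet_inr_subset_of_mem (p := ⟨(b, a), hb, hab.symm⟩) ha) (inl ⟨x, hx⟩) with h | h <;>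
    cases h

theorem isTree_iff_of_isIndepSet (hS : G.IsIndepSet S) (hne : (Sᶜ : Set V).Nonempty) :
    (G.Break S).IsTree ↔ (G.induce Sᶜ).IsTree := by
  obtain ⟨x, hx⟩ := hne
  rw [isTree_iff_induce_of_forall_neighborSet_eq_singleton
      (s := Set.range (inlEmbedding G S)) ⟨_, ⟨x, hx⟩, rfl⟩,
    ← (inlEmbedding G S).isoInduceRange.isTree_iff]
  rintro (x | p) hv
  · exact absurd ⟨x, rfl⟩ hv
  · have h : p.1.2 ∉ S := fun h => hS p.2.1 h (G.ne_of_adj p.2.2) p.2.2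
    exact ⟨_, ⟨_, rfl⟩, neighborSet_inr_of_notMem h⟩

end Break

end SimpleGraph

theorem break_isTree_iff_independent_and_induce_isTree_general {V : Type*}
    (G : SimpleGraph V) (S : Set V) (hne : (Sᶜ : Set V).Nonempty) :
    (G.Break S).IsTree ↔
      (∀ a ∈ S, ∀ b ∈ S, ¬ G.Adj a b) ∧ (G.induce Sᶜ).IsTree := by
  have isIndepSet_iff_forall : G.IsIndepSet S ↔ ∀ a ∈ S, ∀ b ∈ S, ¬ G.Adj a b :=
    ⟨fun h a ha b hb hab => h ha hb (G.ne_of_adj hab) hab, fun h a ha b hb _ => h a ha b hb⟩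
  rw [← isIndepSet_iff_forall]
  constructor
  · intro hT
    have hS := SimpleGraph.Break.isIndepSet_of_connected hne hT.connected
    exact ⟨hS, (SimpleGraph.Break.isTree_iff_of_isIndepSet hS hne).mp hT⟩
  · rintro ⟨hS, hT⟩
    exact (SimpleGraph.Break.isTree_iff_of_isIndepSet hS hne).mpr hT

theorem break_isTree_iff_independent_and_induce_isTree {V : Type*} [Fintype V]
    (G : SimpleGraph V) (S : Set V) (hne : (Sᶜ : Set V).Nonempty) :
    (G.Break S).IsTree ↔
      (∀ a ∈ S, ∀ b ∈ S, ¬ G.Adj a b) ∧ (G.induce Sᶜ).IsTree :=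
  break_isTree_iff_independent_and_induce_isTree_general G S hne
end

section
/- Let V be a finite type with at least 3 elements, let A : V → V → Prop be a directed graph on V, and let u, v ∈ V be distinct with A u v. Then the number of Hamiltonian cycles σ of (V, A) satisfying σ u = v equals the number of Hamiltonian cycles of the simplification of (V, A) over the edge (u, v). In particular, Hamiltonian cycles of the simplified graph are in bijection with Hamiltonian cycles of (V, A) that use the edge (u, v). -/
/-- A Hamiltonian cycle of the directed graph `(V, A)` is a permutation of `V`
that is a single cycle with full support and follows the edge relation `A`. -/
def IsHamiltonianCycle {V : Type*} [Fintype V] [DecidableEq V]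
    (A : V → V → Prop) (σ : Equiv.Perm V) : Prop :=
  σ.IsCycle ∧ σ.support = Finset.univ ∧ ∀ w, A w (σ w)

/-- The simplification of the directed graph `(V, A)` over the edge `(u, v)`:
remove all edges out of `u` and into `v`, then contract `(u, v)`; the merged
vertex (represented by `u`) inherits the in-edges of `u` and out-edges of `v`. -/
def Simplify {V : Type*} (A : V → V → Prop) (u v : V) :
    {x : V // x ≠ v} → {x : V // x ≠ v} → Prop :=
  fun x y =>
    ((x : V) = u → A v (y : V)) ∧ ((x : V) ≠ u → A (x : V) (y : V))

/-!
Right multiplication by the transposition `(u v)` turns a permutation `σ` with `σ u = v` into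
a permutation fixing `v`, i.e. a permutation `τ` of `V ∖ {v}`, and this is a bijection. In cycle
notation `τ` is `σ` with `v` cut out (`u ↦ σ v`), so `σ` is one cycle through all of `V` iff `τ`
is one cycle through all of `V ∖ {v}`; here `3 ≤ |V|` rules out `σ = (u v)`, which would leave
`τ` the identity. The edges followed by `σ` other than `(u, v)` are exactly those followed by
`τ` in the simplified graph.
-/
open Equiv Equiv.Perm Finset

namespace Equiv.Perm

variable {α : Type*}

theorem SameCycle.of_forall_sameCycle_apply {f g : Perm α}
    (h : ∀ y, f.SameCycle y (g y)) {a b : α} (hab : g.SameCycle a b) : f.SameCycle a b := by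
  obtain ⟨i, rfl⟩ := hab
  induction i using Int.induction_on with
  | zero => exact SameCycle.rfl
  | succ i ih =>
    rw [add_comm, zpow_add, zpow_one, mul_apply]
    exact ih.trans (h _)
  | pred i ih =>
    rw [sub_eq_neg_add, zpow_add, zpow_neg_one, mul_apply]
    exact ih.trans (by simpa using (h (g⁻¹ ((g ^ (-(i : ℤ))) a))).symm)

variable [DecidableEq α]

theorem sameCycle_swap_mul_apply (f : Perm α) (x y : α) :
    f.SameCycle y ((swap x (f x) * f) y) := by
  rw [mul_apply, swap_apply_def]
  split_ifs with h₁ h₂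
  · simp [← h₁, sameCycle_apply_right, SameCycle.rfl]
  · rw [← f.injective h₂]
  · simp [sameCycle_apply_right, SameCycle.rfl]

theorem IsCycle.of_swap_mul {f : Perm α} {x : α} (hx : f x ≠ x) (hffx : f (f x) ≠ x)
    (hg : (swap x (f x) * f).IsCycle) : f.IsCycle := by
  set g := swap x (f x) * f
  have hgfx : g (f x) ≠ f x := by
    rwa [mul_apply, swap_apply_of_ne_of_ne hffx (f.injective.ne hx), Ne, f.injective.eq_iff]
  refine ⟨f x, f.injective.ne hx, fun y hy => ?_⟩
  by_cases hgy : g y = y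
  · rw [mul_apply, swap_apply_def] at hgy
    split_ifs at hgy with h₁ h₂
    · rw [hgy]
    · rw [f.injective h₂]; exact sameCycle_apply_left.2 SameCycle.rfl
    · exact absurd hgy hy
  · exact SameCycle.of_forall_sameCycle_apply (sameCycle_swap_mul_apply f x)
      (hg.sameCycle hgfx hgy)

theorem isCycle_swap_mul_iff {f : Perm α} {x : α} (hx : f x ≠ x) (hffx : f (f x) ≠ x) :
    (swap x (f x) * f).IsCycle ↔ f.IsCycle :=
  ⟨IsCycle.of_swap_mul hx hffx, fun hf => hf.swap_mul hx hffx⟩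

theorem isCycle_swap_mul_and_support_eq_erase_iff [Fintype α] {f : Perm α} {x : α}
    (hx : f x ≠ x) (hα : 3 ≤ Fintype.card α) :
    (swap x (f x) * f).IsCycle ∧ (swap x (f x) * f).support = univ.erase x ↔
      f.IsCycle ∧ f.support = univ := by
  by_cases hffx : f (f x) = x
  · have hgfx : (swap x (f x) * f) (f x) = f x := by rw [mul_apply, hffx, swap_apply_left]
    refine iff_of_false (fun ⟨_, hs⟩ => ?_) (fun ⟨hf, hs⟩ => ?_)
    · have : f x ∈ (swap x (f x) * f).support := by
        rw [hs]; exact mem_erase.2 ⟨hx, mem_univ _⟩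
      exact mem_support.1 this hgfx
    · have h2 := congrArg (fun g : Perm α => #g.support)
        (hf.eq_swap_of_apply_apply_eq_self hx hffx)
      simp only [hs, card_univ, card_support_swap hx.symm] at h2
      omega
  · rw [isCycle_swap_mul_iff hx hffx, support_swap_mul_eq f x hffx, sdiff_singleton_eq_erase]
    refine and_congr_right fun _ => ⟨fun h => ?_, fun h => by rw [h]⟩
    rw [← insert_erase (mem_support.2 hx), h, insert_erase (mem_univ x)]

theorem isCycle_ofSubtype_iff [Fintype α] {p : α → Prop} [DecidablePred p]
    {τ : Perm (Subtype p)} : (ofSubtype τ).IsCycle ↔ τ.IsCycle := by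
  rw [← card_cycleType_eq_one, cycleType_ofSubtype, card_cycleType_eq_one]

theorem support_ofSubtype_eq_filter_iff [Fintype α] {p : α → Prop} [DecidablePred p]
    {τ : Perm (Subtype p)} : (ofSubtype τ).support = univ.filter p ↔ τ.support = univ := by
  rw [support_ofSubtype, ← univ_map_subtype, map_inj]

end Equiv.Perm

section Simplify

variable {V : Type*} [DecidableEq V] {A : V → V → Prop} {u v : V}

def permSubtypeNeEquiv (u v : V) : Perm {x // x ≠ v} ≃ {σ : Perm V // σ u = v} :=
  (Perm.subtypeEquivSubtypePerm _).trans <|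
    (Equiv.mulRight (swap u v)).subtypeEquiv fun f => by simp

theorem coe_permSubtypeNeEquiv (τ : Perm {x // x ≠ v}) :
    (permSubtypeNeEquiv u v τ : Perm V) = ofSubtype τ * swap u v := rfl

theorem forall_rel_ofSubtype_mul_swap_iff (huv : u ≠ v) (hA : A u v)
    (τ : Perm {x // x ≠ v}) :
    (∀ w, A w ((ofSubtype τ * swap u v) w)) ↔ ∀ x, Simplify A u v x (τ x) := by
  have hu : (ofSubtype τ * swap u v) u = v := by simp [ofSubtype_apply_of_not_mem]
  have hv : (ofSubtype τ * swap u v) v = τ ⟨u, huv⟩ := by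
    simp [ofSubtype_apply_of_mem τ huv]
  have hw : ∀ w (hwu : w ≠ u) (hwv : w ≠ v), (ofSubtype τ * swap u v) w = τ ⟨w, hwv⟩ := by
    intro w hwu hwv
    simp [swap_apply_of_ne_of_ne hwu hwv, ofSubtype_apply_of_mem τ hwv]
  constructor
  · rintro h ⟨x, hxv⟩
    refine ⟨fun hxu => ?_, fun hxu => ?_⟩
    · subst hxu; simpa [hv] using h v
    · simpa [hw x hxu hxv] using h x
  · intro h w
    obtain rfl | hwu := eq_or_ne w u
    · rwa [hu]
    obtain rfl | hwv := eq_or_ne w v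
    · rw [hv]; exact (h ⟨u, huv⟩).1 rfl
    · rw [hw w hwu hwv]; exact (h ⟨w, hwv⟩).2 hwu

variable [Fintype V]

theorem isHamiltonianCycle_ofSubtype_mul_swap_iff (huv : u ≠ v) (hA : A u v)
    (h3 : 3 ≤ Fintype.card V) (τ : Perm {x // x ≠ v}) :
    IsHamiltonianCycle A (ofSubtype τ * swap u v) ↔ IsHamiltonianCycle (Simplify A u v) τ := by
  set σ := ofSubtype τ * swap u v
  have hσu : σ u = v := by simp [σ, ofSubtype_apply_of_not_mem]
  have hσv : σ v ≠ v := by simp [σ, ofSubtype_apply_of_mem τ huv, (τ _).2]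
  have hσ_swap : swap v (σ v) * σ = ofSubtype τ := by
    have h := mul_swap_eq_swap_mul σ u v
    rw [hσu] at h
    rw [← h, mul_assoc, swap_mul_self, mul_one]
  rw [IsHamiltonianCycle, IsHamiltonianCycle, ← and_assoc, ← and_assoc,
    ← isCycle_swap_mul_and_support_eq_erase_iff hσv h3, hσ_swap, isCycle_ofSubtype_iff,
    ← filter_ne', support_ofSubtype_eq_filter_iff, forall_rel_ofSubtype_mul_swap_iff huv hA]

end Simplify

theorem card_hamiltonianCycles_simplify {V : Type*} [Fintype V] [DecidableEq V]
    (A : V → V → Prop) (u v : V) (huv : u ≠ v) (hA : A u v)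
    (h3 : 3 ≤ Fintype.card V) :
    Nat.card {σ : Equiv.Perm V // IsHamiltonianCycle A σ ∧ σ u = v} =
      Nat.card {τ : Equiv.Perm {x : V // x ≠ v} //
        IsHamiltonianCycle (Simplify A u v) τ} := by
  calc Nat.card {σ : Perm V // IsHamiltonianCycle A σ ∧ σ u = v}
      = Nat.card {σ : {σ : Perm V // σ u = v} // IsHamiltonianCycle A σ} :=
        Nat.card_congr <| (subtypeEquivRight fun _ => and_comm).trans
          (subtypeSubtypeEquivSubtypeInter _ _).symm
    _ = _ := Nat.card_congr <| ((permSubtypeNeEquiv u v).subtypeEquiv fun τ =>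
        by rw [coe_permSubtypeNeEquiv, isHamiltonianCycle_ofSubtype_mul_swap_iff huv hA h3]).symm
end

section
/- Let V be a finite type with at least 3 elements, let A : V → V → Prop be a directed graph on V, and let u, v ∈ V be distinct with A u v. Suppose that either v is the unique out-neighbor of u (for all w, A u w implies w = v) or u is the unique in-neighbor of v (for all w, A w v implies w = u). Then (V, A) has a Hamiltonian cycle if and only if the simplification of (V, A) over the edge (u, v) has a Hamiltonian cycle. -/
/-!
Hamiltonian cycles of the simplified graph correspond to Hamiltonian cycles of `(V, A)` through
the edge `(u, v)`: a cyclic permutation `τ` of `V ∖ {v}` becomes one of `V` by inserting `v`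
right after `u` (the permutation `ofSubtype τ * swap u v`), and this changes the successor only
at `u` and `v`, exactly where `Simplify` replaces the out-edges of `u` by those of `v`.
The forcing hypothesis makes every Hamiltonian cycle of `(V, A)` step from `u` to `v`, and with
at least three vertices it does not step back from `v` to `u`, so removing `v` leaves a cycle.
-/

open Equiv Equiv.Perm

namespace Equiv.Perm

variable {α : Type*} {f : Perm α} {x y : α}

theorem SameCycle.iff_of_forall_apply {P : α → Prop} (hP : ∀ z, P (f z) ↔ P z)
    (h : f.SameCycle x y) : P x ↔ P y := by
  obtain ⟨n, rfl⟩ := h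
  induction n using Int.induction_on with
  | zero => simp
  | succ n ih => rw [ih, add_comm, zpow_one_add, mul_apply, hP]
  | pred n ih =>
    rw [ih, ← hP ((f ^ (-(n : ℤ) - 1)) x), ← mul_apply, ← zpow_one_add, add_sub_cancel]

variable [DecidableEq α] {u v : α}

/- `σ = f * swap u v` runs `u ↦ v ↦ f u` and agrees with `f` elsewhere; each side of the
equivalence is a predicate invariant under the other permutation. -/
theorem sameCycle_mul_swap_iff (hv : f v = v) (huv : u ≠ v) :
    (f * swap u v).SameCycle u x ↔ x = v ∨ f.SameCycle u x := by
  set σ := f * swap u v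
  have hσu : σ u = v := by simp [σ, hv]
  have hσv : σ v = f u := by simp [σ]
  have hσ : ∀ z, z ≠ u → z ≠ v → σ z = f z := fun z hzu hzv => by
    simp [σ, swap_apply_of_ne_of_ne hzu hzv]
  constructor
  · intro h
    refine (SameCycle.iff_of_forall_apply (P := fun z => z = v ∨ f.SameCycle u z)
      (fun z => ?_) h).mp (Or.inr SameCycle.rfl)
    rcases eq_or_ne z u with rfl | hzu
    · simp [hσu, SameCycle.rfl]
    rcases eq_or_ne z v with rfl | hzv
    · simp [hσv, sameCycle_apply_right, SameCycle.rfl]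
    have hfz : f z ≠ v := fun h => hzv (f.injective (h.trans hv.symm))
    simp [hσ z hzu hzv, sameCycle_apply_right, hzv, hfz]
  · rintro (rfl | h)
    · exact ⟨1, by simpa using hσu⟩
    refine (SameCycle.iff_of_forall_apply (P := σ.SameCycle u) (fun z => ?_) h).mp SameCycle.rfl
    rcases eq_or_ne z u with rfl | hzu
    · rw [← hσv, ← hσu, sameCycle_apply_right, sameCycle_apply_right]
    rcases eq_or_ne z v with rfl | hzv
    · rw [hv]
    rw [← hσ z hzu hzv, sameCycle_apply_right]

theorem isCycle_and_support_eq_univ_iff [Fintype α] (σ : Perm α) (u : α) :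
    σ.IsCycle ∧ σ.support = Finset.univ ↔
      (∀ x, σ x ≠ x) ∧ ∀ x, σ.SameCycle u x := by
  constructor
  · rintro ⟨hc, hs⟩
    have hmove : ∀ x, σ x ≠ x := fun x => mem_support.mp (hs ▸ Finset.mem_univ x)
    exact ⟨hmove, fun x => hc.sameCycle (hmove u) (hmove x)⟩
  · rintro ⟨hmove, hsc⟩
    exact ⟨⟨u, hmove u, fun y _ => hsc y⟩,
      Finset.eq_univ_of_forall fun x => mem_support.mpr (hmove x)⟩

theorem IsCycle.apply_apply_ne [Fintype α] (hf : f.IsCycle) (h : 2 < f.support.card)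
    (hx : f x ≠ x) : f (f x) ≠ x := by
  intro hxx
  rw [hf.eq_swap_of_apply_apply_eq_self hx hxx, card_support_swap hx.symm] at h
  exact lt_irrefl _ h

end Equiv.Perm

section InsertAfter

variable {V : Type*} [DecidableEq V] {A : V → V → Prop} {u v : V} (τ : Perm {x // x ≠ v})

def insertAfter (u : V) : Perm V := ofSubtype τ * swap u v

theorem insertAfter_apply_left : insertAfter τ u u = v := by
  simp [insertAfter, ofSubtype_apply_of_not_mem]

theorem insertAfter_apply_right (huv : u ≠ v) : insertAfter τ u v = τ ⟨u, huv⟩ := by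
  simp [insertAfter, ofSubtype_apply_of_mem τ huv]

theorem insertAfter_apply_of_ne (x : {x // x ≠ v}) (hx : (x : V) ≠ u) :
    insertAfter τ u x = τ x := by
  simp [insertAfter, swap_apply_of_ne_of_ne hx x.2, ofSubtype_apply_of_mem τ x.2]

theorem sameCycle_insertAfter_iff (huv : u ≠ v) (x : {x // x ≠ v}) :
    (insertAfter τ u).SameCycle u x ↔ τ.SameCycle ⟨u, huv⟩ x := by
  rw [insertAfter, sameCycle_mul_swap_iff (ofSubtype_apply_of_not_mem τ (by simp)) huv]
  simp only [x.2, false_or]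
  exact sameCycle_extendDomain (f := Equiv.refl _) (x := ⟨u, huv⟩) (y := x)

theorem exists_insertAfter_eq {σ : Perm V} (h : σ u = v) :
    ∃ τ : Perm {x // x ≠ v}, insertAfter τ u = σ := by
  have hv : (σ * swap u v) v = v := by simp [h]
  refine ⟨(σ * swap u v).subtypePerm fun x => ?_, ?_⟩
  · exact (σ * swap u v).injective.ne_iff' hv
  · have hfix : ∀ x, (σ * swap u v) x ≠ x → x ≠ v := by rintro x hx rfl; exact hx hv
    rw [insertAfter, ofSubtype_subtypePerm (f := σ * swap u v) _ hfix, mul_swap_mul_self]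

theorem forall_insertAfter_apply_ne_iff (huv : u ≠ v) (hτu : τ ⟨u, huv⟩ ≠ ⟨u, huv⟩) :
    (∀ x, insertAfter τ u x ≠ x) ↔ ∀ x, τ x ≠ x := by
  constructor
  · intro h x
    rcases eq_or_ne (x : V) u with hxu | hxu
    · obtain rfl : x = ⟨u, huv⟩ := Subtype.ext hxu
      exact hτu
    · exact fun hx => h x (by rw [insertAfter_apply_of_ne τ x hxu, hx])
  · intro h x
    rcases eq_or_ne x v with rfl | hxv
    · rw [insertAfter_apply_right τ huv]
      exact (τ _).2
    rcases eq_or_ne x u with rfl | hxu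
    · rw [insertAfter_apply_left]
      exact huv.symm
    · rw [insertAfter_apply_of_ne τ ⟨x, hxv⟩ hxu]
      exact fun hx => h ⟨x, hxv⟩ (Subtype.ext hx)

theorem forall_sameCycle_insertAfter_iff (huv : u ≠ v) :
    (∀ x, (insertAfter τ u).SameCycle u x) ↔ ∀ x, τ.SameCycle ⟨u, huv⟩ x := by
  refine ⟨fun h x => (sameCycle_insertAfter_iff τ huv x).mp (h x), fun h x => ?_⟩
  rcases eq_or_ne x v with rfl | hxv
  · exact ⟨1, by simpa using insertAfter_apply_left τ⟩
  · exact (sameCycle_insertAfter_iff τ huv ⟨x, hxv⟩).mpr (h _)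

theorem forall_adj_insertAfter_iff (huv : u ≠ v) (hA : A u v) :
    (∀ w, A w (insertAfter τ u w)) ↔ ∀ x, Simplify A u v x (τ x) := by
  constructor
  · rintro h ⟨x, hxv⟩
    refine ⟨?_, fun hxu => ?_⟩
    · rintro (rfl : x = u)
      simpa [insertAfter_apply_right τ huv] using h v
    · simpa [insertAfter_apply_of_ne τ ⟨x, hxv⟩ hxu] using h x
  · intro h w
    rcases eq_or_ne w v with rfl | hwv
    · rw [insertAfter_apply_right τ huv]
      exact (h ⟨u, huv⟩).1 rfl
    rcases eq_or_ne w u with rfl | hwu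
    · rwa [insertAfter_apply_left]
    · rw [insertAfter_apply_of_ne τ ⟨w, hwv⟩ hwu]
      exact (h ⟨w, hwv⟩).2 hwu

end InsertAfter

section Hamiltonian

variable {V : Type*} [Fintype V] [DecidableEq V] {A : V → V → Prop} {u v : V}

theorem IsHamiltonianCycle.apply_ne {σ : Perm V} (hσ : IsHamiltonianCycle A σ) (x : V) :
    σ x ≠ x :=
  mem_support.mp (hσ.2.1 ▸ Finset.mem_univ x)

theorem IsHamiltonianCycle.apply_apply_ne {σ : Perm V} (hσ : IsHamiltonianCycle A σ)
    (h3 : 3 ≤ Fintype.card V) (x : V) : σ (σ x) ≠ x :=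
  hσ.1.apply_apply_ne (by rw [hσ.2.1, Finset.card_univ]; omega) (hσ.apply_ne x)

theorem IsHamiltonianCycle.apply_eq_of_forced {σ : Perm V} (hσ : IsHamiltonianCycle A σ)
    (hforced : (∀ w, A u w → w = v) ∨ (∀ w, A w v → w = u)) : σ u = v := by
  rcases hforced with h | h
  · exact h _ (hσ.2.2 u)
  · have hpred : σ.symm v = u := h _ (by simpa using hσ.2.2 (σ.symm v))
    rw [← hpred, apply_symm_apply]

variable (τ : Perm {x // x ≠ v})

theorem insertAfter_isCycle_and_support_eq_univ_iff (huv : u ≠ v)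
    (hτu : τ ⟨u, huv⟩ ≠ ⟨u, huv⟩) :
    (insertAfter τ u).IsCycle ∧ (insertAfter τ u).support = Finset.univ ↔
      τ.IsCycle ∧ τ.support = Finset.univ := by
  rw [isCycle_and_support_eq_univ_iff _ u, isCycle_and_support_eq_univ_iff _ ⟨u, huv⟩,
    forall_insertAfter_apply_ne_iff τ huv hτu, forall_sameCycle_insertAfter_iff τ huv]

theorem isHamiltonianCycle_insertAfter_iff (huv : u ≠ v) (hA : A u v)
    (hτu : τ ⟨u, huv⟩ ≠ ⟨u, huv⟩) :
    IsHamiltonianCycle A (insertAfter τ u) ↔ IsHamiltonianCycle (Simplify A u v) τ := by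
  simp only [IsHamiltonianCycle, ← and_assoc]
  rw [insertAfter_isCycle_and_support_eq_univ_iff τ huv hτu,
    forall_adj_insertAfter_iff τ huv hA]

end Hamiltonian

theorem hamiltonian_iff_simplify_hamiltonian {V : Type*} [Fintype V] [DecidableEq V]
    (A : V → V → Prop) (u v : V) (huv : u ≠ v) (hA : A u v)
    (h3 : 3 ≤ Fintype.card V)
    (hforced : (∀ w, A u w → w = v) ∨ (∀ w, A w v → w = u)) :
    (∃ σ : Equiv.Perm V, IsHamiltonianCycle A σ) ↔
      (∃ τ : Equiv.Perm {x : V // x ≠ v}, IsHamiltonianCycle (Simplify A u v) τ) := by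
  constructor
  · rintro ⟨σ, hσ⟩
    obtain ⟨τ, rfl⟩ := exists_insertAfter_eq (hσ.apply_eq_of_forced hforced)
    have hτu : τ ⟨u, huv⟩ ≠ ⟨u, huv⟩ := fun h => hσ.apply_apply_ne h3 u <| by
      rw [insertAfter_apply_left, insertAfter_apply_right τ huv, h]
    exact ⟨τ, (isHamiltonianCycle_insertAfter_iff τ huv hA hτu).mp hσ⟩
  · rintro ⟨τ, hτ⟩
    exact ⟨insertAfter τ u,
      (isHamiltonianCycle_insertAfter_iff τ huv hA (hτ.apply_ne _)).mpr hτ⟩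
end
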